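/- Let (S(i)) be the Bernoulli(p) random walk, and for a < b let τ_{a,b} = min{i ≥ 1 : S(i) ∈ {a,b}}. For a < x < b and 0 < u < 1, with B±(u) = (1±√(1-4pqu²))/(2pu): E_x(u^{τ_a}; τ_a < τ_b) = (B⁺(u)^{x-b} - B⁻(u)^{x-b})/(B⁺(u)^{a-b} - B⁻(u)^{a-b}) and E_x(u^{τ_b}; τ_b < τ_a) = (B⁺(u)^{x-a} - B⁻(u)^{x-a})/(B⁺(u)^{b-a} - B⁻(u)^{b-a}). -/

import Mathlib

open Finset

noncomputable section

/-- Step value of the Bernoulli walk: `+1` for `true`, `-1` for `false`. -/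
def stepVal (b : Bool) : ℤ := if b then 1 else -1

/-- Position at time `i` of the walk started at `x` with step sequence `ε`. -/
def walkFn (x : ℤ) (ε : ℕ → Bool) (i : ℕ) : ℤ :=
  x + ∑ k ∈ Finset.range i, stepVal (ε k)

/-- Extend a finite sequence by a default value. -/
def extendF {n : ℕ} {α : Type*} (d : α) (ε : Fin n → α) : ℕ → α :=
  fun k => if h : k < n then ε ⟨k, h⟩ else d

/-- Weight of a single step: `p` for `+1`, `1-p` for `-1`. -/
def wt (p : ℝ) (b : Bool) : ℝ := if b then p else 1 - p

open Classical in
/-- Probability, for the Bernoulli(p) walk started at `x`, of an event `P` on the path,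
computed over the horizon `n` (the event should only depend on times `≤ n`). -/
def walkProb (p : ℝ) (x : ℤ) (n : ℕ) (P : (ℕ → ℤ) → Prop) : ℝ :=
  ∑ ε : Fin n → Bool, if P (walkFn x (extendF false ε)) then ∏ k, wt p (ε k) else 0

end

noncomputable section

/-- `A(u) = √(1 - 4pq u²)` with `q = 1-p`. -/
def Afn (p u : ℝ) : ℝ := Real.sqrt (1 - 4*p*(1-p)*u^2)

/-- `B⁺(u) = (1 + A(u))/(2pu)`. -/
def Bplus (p u : ℝ) : ℝ := (1 + Afn p u)/(2*p*u)

/-- `B⁻(u) = (1 - A(u))/(2pu)`. -/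
def Bminus (p u : ℝ) : ℝ := (1 - Afn p u)/(2*p*u)

end

section Basic

lemma extendF_cons_succ {n : ℕ} (c : Bool) (ε : Fin n → Bool) (k : ℕ) :
    extendF false (Fin.cons c ε) (k+1) = extendF false ε k := by
  unfold extendF
  by_cases h : k < n
  · rw [dif_pos (by omega : k + 1 < n + 1), dif_pos h]
    exact Fin.cons_succ (α := fun _ : Fin (n+1) => Bool) c ε ⟨k, h⟩
  · rw [dif_neg (by omega), dif_neg h]

lemma extendF_cons_zero {n : ℕ} (c : Bool) (ε : Fin n → Bool) :
    extendF false (Fin.cons c ε) 0 = c := by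
  unfold extendF
  rw [dif_pos (by omega : 0 < n + 1)]
  exact Fin.cons_zero (α := fun _ : Fin (n+1) => Bool) c ε

lemma walkFn_zero (x : ℤ) (e : ℕ → Bool) : walkFn x e 0 = x := by
  simp [walkFn]

lemma walkFn_shift {n : ℕ} (x : ℤ) (c : Bool) (ε : Fin n → Bool) (i : ℕ) :
    walkFn x (extendF false (Fin.cons c ε)) (i+1)
      = walkFn (x + stepVal c) (extendF false ε) i := by
  unfold walkFn
  rw [Finset.sum_range_succ']
  simp only [extendF_cons_succ, extendF_cons_zero]
  ring

lemma sum_bool_succ {n : ℕ} (f : (Fin (n+1) → Bool) → ℝ) :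
    ∑ ε : Fin (n+1) → Bool, f ε
      = ∑ ε : Fin n → Bool, f (Fin.cons true ε)
        + ∑ ε : Fin n → Bool, f (Fin.cons false ε) := by
  rw [← (Fin.consEquiv (fun _ : Fin (n+1) => Bool)).sum_comp f]
  rw [Fintype.sum_prod_type]
  rw [Fintype.sum_bool]
  rfl

lemma prod_wt_cons {p : ℝ} {n : ℕ} (c : Bool) (ε : Fin n → Bool) :
    ∏ k : Fin (n+1), wt p (Fin.cons (α := fun _ => Bool) c ε k)
      = wt p c * ∏ k : Fin n, wt p (ε k) := by
  rw [Fin.prod_univ_succ (f := fun k : Fin (n+1) => wt p (Fin.cons (α := fun _ => Bool) c ε k))]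
  simp

lemma sum_prod_wt (p : ℝ) : ∀ n : ℕ, ∑ ε : Fin n → Bool, ∏ k, wt p (ε k) = 1 := by
  intro n
  induction n with
  | zero => simp
  | succ m ih =>
      rw [sum_bool_succ (fun ε => ∏ k, wt p (ε k))]
      simp only [prod_wt_cons, ← Finset.mul_sum, ih]
      simp [wt]

lemma wt_nonneg {p : ℝ} (hp : p ∈ Set.Ioo (0:ℝ) 1) (c : Bool) : 0 ≤ wt p c := by
  cases c <;> simp [wt] <;> [linarith [hp.2]; linarith [hp.1]]

lemma walkProb_nonneg {p : ℝ} (hp : p ∈ Set.Ioo (0:ℝ) 1) (x : ℤ) (n : ℕ) (P : (ℕ → ℤ) → Prop) :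
    0 ≤ walkProb p x n P := by
  unfold walkProb
  apply Finset.sum_nonneg
  intro ε _
  split
  · exact Finset.prod_nonneg fun k _ => wt_nonneg hp _
  · exact le_refl 0

lemma walkProb_le_one {p : ℝ} (hp : p ∈ Set.Ioo (0:ℝ) 1) (x : ℤ) (n : ℕ) (P : (ℕ → ℤ) → Prop) :
    walkProb p x n P ≤ 1 := by
  unfold walkProb
  calc _ ≤ ∑ ε : Fin n → Bool, ∏ k, wt p (ε k) := by
        apply Finset.sum_le_sum
        intro ε _
        split
        · exact le_refl _
        · exact Finset.prod_nonneg fun k _ => wt_nonneg hp _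
    _ = 1 := sum_prod_wt p n

end Basic

section Step

open Classical

def EV (a b t : ℤ) (j : ℕ) : (ℕ → ℤ) → Prop :=
  fun S => 1 ≤ j ∧ S j = t ∧ ∀ i, 1 ≤ i → i < j → S i ≠ a ∧ S i ≠ b

noncomputable def hitP (p : ℝ) (a b t x : ℤ) (j : ℕ) : ℝ := walkProb p x j (EV a b t j)

noncomputable def CC (p : ℝ) (a b t y : ℤ) (j : ℕ) : ℝ :=
  if y = a ∨ y = b then (if y = t ∧ j = 0 then 1 else 0) else hitP p a b t y j

lemma hitP_zero (p : ℝ) (a b t x : ℤ) : hitP p a b t x 0 = 0 := by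
  simp [hitP, walkProb, EV]

lemma branch (p : ℝ) (a b t x : ℤ) (hax : a < x) (hxb : x < b) (ht : t = a ∨ t = b)
    (c : Bool) (j : ℕ) :
    (∑ ε : Fin j → Bool,
        if EV a b t (j+1) (walkFn x (extendF false (Fin.cons (α := fun _ => Bool) c ε)))
        then ∏ k : Fin (j+1), wt p (Fin.cons (α := fun _ => Bool) c ε k) else 0)
      = wt p c * CC p a b t (x + stepVal c) j := by
  set y := x + stepVal c with hy
  have hyab : a ≤ y ∧ y ≤ b := by
    cases c <;> simp [stepVal, hy] <;> omega
  have hS1 : ∀ ε : Fin j → Bool, walkFn x (extendF false (Fin.cons c ε)) 1 = y := by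
    intro ε
    have := walkFn_shift x c ε 0
    rw [this, walkFn_zero]
  by_cases hb : y = a ∨ y = b
  · rcases Nat.eq_zero_or_pos j with hj | hj
    · subst hj
      have hEV : ∀ ε : Fin 0 → Bool,
          EV a b t 1 (walkFn x (extendF false (Fin.cons c ε))) ↔ y = t := by
        intro ε
        constructor
        · rintro ⟨-, h2, -⟩; rw [← hS1 ε]; exact h2
        · intro h
          exact ⟨le_refl 1, by rw [hS1 ε, h], by intro i h1 h2; omega⟩
      rw [Finset.sum_congr rfl (fun ε _ => if_congr (hEV ε) rfl rfl)]
      rw [CC, if_pos hb]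
      by_cases hyt : y = t
      · simp [hyt, prod_wt_cons]
      · simp [hyt]
    · have hEV : ∀ ε : Fin j → Bool,
          ¬ EV a b t (j+1) (walkFn x (extendF false (Fin.cons c ε))) := by
        intro ε h
        obtain ⟨-, -, h3⟩ := h
        have h4 := h3 1 (le_refl 1) (by omega)
        rw [hS1 ε] at h4
        rcases hb with h | h
        · exact h4.1 h
        · exact h4.2 h
      rw [Finset.sum_congr rfl (fun ε _ => if_neg (hEV ε)), CC, if_pos hb,
        if_neg (by rintro ⟨-, h0⟩; omega)]
      simp
  · push_neg at hb
    have hay : a < y := lt_of_le_of_ne hyab.1 (Ne.symm hb.1)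
    have hyb : y < b := lt_of_le_of_ne hyab.2 hb.2
    rw [CC, if_neg (by push_neg; exact hb)]
    rcases Nat.eq_zero_or_pos j with hj | hj
    · subst hj
      have hEV : ∀ ε : Fin 0 → Bool,
          ¬ EV a b t 1 (walkFn x (extendF false (Fin.cons c ε))) := by
        intro ε h
        obtain ⟨-, h2, -⟩ := h
        rw [hS1 ε] at h2
        rcases ht with h | h <;> subst h
        · exact hb.1 h2
        · exact hb.2 h2
      rw [Finset.sum_congr rfl (fun ε _ => if_neg (hEV ε))]
      rw [hitP_zero]
      simp
    · have hEV : ∀ ε : Fin j → Bool,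
          EV a b t (j+1) (walkFn x (extendF false (Fin.cons c ε)))
            ↔ EV a b t j (walkFn y (extendF false ε)) := by
        intro ε
        constructor
        · rintro ⟨-, h2, h3⟩
          refine ⟨hj, ?_, ?_⟩
          · rw [← walkFn_shift x c ε j]; exact h2
          · intro i h1i hij
            have := h3 (i+1) (by omega) (by omega)
            rw [walkFn_shift x c ε i] at this
            exact this
        · rintro ⟨-, h2, h3⟩
          refine ⟨by omega, ?_, ?_⟩
          · rw [walkFn_shift x c ε j]; exact h2
          · intro i h1i hij
            rcases Nat.eq_or_lt_of_le h1i with h | h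
            · rw [← h, hS1 ε]
              exact hb
            · obtain ⟨i', rfl⟩ : ∃ i', i = i' + 1 := ⟨i - 1, by omega⟩
              rw [walkFn_shift x c ε i']
              exact h3 i' (by omega) (by omega)
      unfold hitP walkProb
      rw [Finset.mul_sum]
      apply Finset.sum_congr rfl
      intro ε _
      rw [if_congr (hEV ε) (prod_wt_cons c ε) rfl, mul_ite, mul_zero]

lemma stepLemma (p : ℝ) (a b t x : ℤ) (hax : a < x) (hxb : x < b) (ht : t = a ∨ t = b)
    (j : ℕ) :
    hitP p a b t x (j+1) = p * CC p a b t (x+1) j + (1-p) * CC p a b t (x-1) j := by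
  unfold hitP walkProb
  rw [sum_bool_succ (fun ε => if EV a b t (j+1) (walkFn x (extendF false ε))
      then ∏ k, wt p (ε k) else 0)]
  rw [branch p a b t x hax hxb ht true j, branch p a b t x hax hxb ht false j]
  simp [wt, stepVal, sub_eq_add_neg]

end Step

section GF

open Classical

noncomputable def FF (p u : ℝ) (a b t : ℤ) (y : ℤ) : ℝ :=
  if y = a ∨ y = b then (if y = t then 1 else 0) else ∑' j : ℕ, hitP p a b t y j * u^j

lemma summable_hitP {p u : ℝ} (hp : p ∈ Set.Ioo (0:ℝ) 1) (hu : u ∈ Set.Ioo (0:ℝ) 1)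
    (a b t y : ℤ) : Summable (fun j : ℕ => hitP p a b t y j * u^j) := by
  apply Summable.of_nonneg_of_le
    (fun j => mul_nonneg (walkProb_nonneg hp _ _ _) (pow_nonneg hu.1.le j))
    (fun j => ?_) (summable_geometric_of_lt_one hu.1.le hu.2)
  calc hitP p a b t y j * u^j ≤ 1 * u^j :=
        mul_le_mul_of_nonneg_right (walkProb_le_one hp _ _ _) (pow_nonneg hu.1.le j)
    _ = u^j := one_mul _

lemma summable_CC {p u : ℝ} (hp : p ∈ Set.Ioo (0:ℝ) 1) (hu : u ∈ Set.Ioo (0:ℝ) 1)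
    (a b t y : ℤ) : Summable (fun j : ℕ => CC p a b t y j * u^j) := by
  by_cases hb : y = a ∨ y = b
  · apply summable_of_ne_finset_zero (s := {0})
    intro j hj
    simp only [Finset.mem_singleton] at hj
    simp only [CC, if_pos hb]
    simp [hj]
  · simp only [CC, if_neg hb]
    exact summable_hitP hp hu a b t y

lemma tsum_CC {p u : ℝ} (a b t y : ℤ) :
    ∑' j : ℕ, CC p a b t y j * u^j = FF p u a b t y := by
  by_cases hb : y = a ∨ y = b
  · simp only [CC, FF, if_pos hb]
    by_cases hyt : y = t
    · rw [tsum_eq_single 0 (fun j hj => by simp [hj])]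
      simp [hyt]
    · simp [hyt]
  · simp only [CC, FF, if_neg hb]

lemma recurrence {p u : ℝ} (hp : p ∈ Set.Ioo (0:ℝ) 1) (hu : u ∈ Set.Ioo (0:ℝ) 1)
    (a b t x : ℤ) (hax : a < x) (hxb : x < b) (ht : t = a ∨ t = b) :
    (∑' j : ℕ, hitP p a b t x j * u^j)
      = u * (p * FF p u a b t (x+1) + (1-p) * FF p u a b t (x-1)) := by
  rw [Summable.tsum_eq_zero_add (summable_hitP hp hu a b t x)]
  rw [hitP_zero, zero_mul, zero_add]
  have hterm : ∀ j : ℕ, hitP p a b t x (j+1) * u^(j+1)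
      = (u*p) * (CC p a b t (x+1) j * u^j) + (u*(1-p)) * (CC p a b t (x-1) j * u^j) := by
    intro j
    rw [stepLemma p a b t x hax hxb ht j]
    ring
  rw [tsum_congr hterm,
    Summable.tsum_add ((summable_CC hp hu a b t (x+1)).mul_left _)
      ((summable_CC hp hu a b t (x-1)).mul_left _),
    tsum_mul_left, tsum_mul_left, tsum_CC, tsum_CC]
  ring

end GF

section Algebra

variable {p u : ℝ}

lemma arg_pos (hp : p ∈ Set.Ioo (0:ℝ) 1) (hu : u ∈ Set.Ioo (0:ℝ) 1) :
    0 < 1 - 4*p*(1-p)*u^2 := by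
  nlinarith [mul_nonneg (sq_nonneg (2*p-1)) (sq_nonneg u),
    mul_pos (sub_pos.2 hu.2) (by linarith [hu.1] : (0:ℝ) < 1 + u)]

lemma Asq (hp : p ∈ Set.Ioo (0:ℝ) 1) (hu : u ∈ Set.Ioo (0:ℝ) 1) :
    (Afn p u)^2 = 1 - 4*p*(1-p)*u^2 := by
  rw [Afn, Real.sq_sqrt (arg_pos hp hu).le]

lemma Apos (hp : p ∈ Set.Ioo (0:ℝ) 1) (hu : u ∈ Set.Ioo (0:ℝ) 1) : 0 < Afn p u :=
  Real.sqrt_pos.2 (arg_pos hp hu)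

lemma Alt1 (hp : p ∈ Set.Ioo (0:ℝ) 1) (hu : u ∈ Set.Ioo (0:ℝ) 1) : Afn p u < 1 := by
  have h1 := Asq hp hu
  have h2 := Real.sqrt_nonneg (1 - 4*p*(1-p)*u^2)
  rw [← Afn] at h2
  nlinarith [hp.1, hp.2, hu.1, mul_pos (mul_pos hp.1 (sub_pos.2 hp.2)) (mul_pos hu.1 hu.1)]

lemma Bm_pos (hp : p ∈ Set.Ioo (0:ℝ) 1) (hu : u ∈ Set.Ioo (0:ℝ) 1) : 0 < Bminus p u :=
  div_pos (by linarith [Alt1 hp hu]) (by nlinarith [mul_pos hp.1 hu.1])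

lemma Bm_lt_Bp (hp : p ∈ Set.Ioo (0:ℝ) 1) (hu : u ∈ Set.Ioo (0:ℝ) 1) :
    Bminus p u < Bplus p u := by
  have h2 : (0:ℝ) < 2*p*u := by nlinarith [mul_pos hp.1 hu.1]
  rw [Bminus, Bplus, div_lt_div_iff₀ h2 h2]
  nlinarith [mul_pos (Apos hp hu) h2]

lemma rootP (hp : p ∈ Set.Ioo (0:ℝ) 1) (hu : u ∈ Set.Ioo (0:ℝ) 1) :
    p*u*(Bplus p u)^2 - Bplus p u + (1-p)*u = 0 := by
  have hA := Asq hp hu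
  have h2 : (2*p*u) ≠ 0 := by nlinarith [mul_pos hp.1 hu.1]
  rw [Bplus]
  have hp0 : p ≠ 0 := hp.1.ne'
  have hu0 : u ≠ 0 := hu.1.ne'
  field_simp
  linear_combination hA

lemma rootM (hp : p ∈ Set.Ioo (0:ℝ) 1) (hu : u ∈ Set.Ioo (0:ℝ) 1) :
    p*u*(Bminus p u)^2 - Bminus p u + (1-p)*u = 0 := by
  have hA := Asq hp hu
  have h2 : (2*p*u) ≠ 0 := by nlinarith [mul_pos hp.1 hu.1]
  rw [Bminus]
  have hp0 : p ≠ 0 := hp.1.ne'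
  have hu0 : u ≠ 0 := hu.1.ne'
  field_simp
  linear_combination hA

lemma zrec {B : ℝ} (hB : B ≠ 0) (hroot : p*u*B^2 - B + (1-p)*u = 0) (m : ℤ) :
    B^m = u*(p*B^(m+1) + (1-p)*B^(m-1)) := by
  rw [zpow_add_one₀ hB, zpow_sub_one₀ hB]
  have hm : (B:ℝ)^m ≠ 0 := zpow_ne_zero m hB
  field_simp
  linear_combination (-1) * hroot

lemma zpow_neq (hp : p ∈ Set.Ioo (0:ℝ) 1) (hu : u ∈ Set.Ioo (0:ℝ) 1)
    {m : ℤ} (hm : m ≠ 0) : Bplus p u ^ m ≠ Bminus p u ^ m := by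
  have h0 := Bm_pos hp hu
  have hlt := Bm_lt_Bp hp hu
  have key : ∀ n : ℤ, 0 < n → Bminus p u ^ n < Bplus p u ^ n := by
    intro n hn
    obtain ⟨k, rfl⟩ := Int.eq_ofNat_of_zero_le hn.le
    rw [zpow_natCast, zpow_natCast]
    exact pow_lt_pow_left₀ hlt h0.le (by exact_mod_cast hn.ne')
  rcases hm.lt_or_gt with h | h
  · intro heq
    have h1 := key (-m) (by omega)
    rw [zpow_neg, zpow_neg, heq] at h1
    exact lt_irrefl _ h1
  · exact (key m h).ne'

end Algebra


section Main

variable {p u : ℝ}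

lemma unique_rec (hp : p ∈ Set.Ioo (0:ℝ) 1) (hu : u ∈ Set.Ioo (0:ℝ) 1)
    {a b : ℤ} (hab : a < b) (F G : ℤ → ℝ) (hFa : F a = G a) (hFb : F b = G b)
    (hF : ∀ y, a < y → y < b → F y = u * (p * F (y+1) + (1-p) * F (y-1)))
    (hG : ∀ y, a < y → y < b → G y = u * (p * G (y+1) + (1-p) * G (y-1))) :
    ∀ y, a ≤ y → y ≤ b → F y = G y := by
  set d : ℤ → ℝ := fun y => |F y - G y| with hd
  have hamem : a ∈ Finset.Icc a b := Finset.mem_Icc.2 ⟨le_refl a, hab.le⟩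
  have hne : (Finset.Icc a b).Nonempty := ⟨a, hamem⟩
  set M := (Finset.Icc a b).sup' hne d with hM
  have hda : d a = 0 := by simp [hd, hFa]
  have hdb : d b = 0 := by simp [hd, hFb]
  have hM0 : 0 ≤ M := by
    have h := Finset.le_sup' d hamem
    rw [hda] at h
    exact h
  have key : M ≤ u * M := by
    obtain ⟨y, hy, hMy⟩ := Finset.exists_mem_eq_sup' hne d
    rw [← hM] at hMy
    rw [Finset.mem_Icc] at hy
    by_cases hya : y = a
    · rw [hMy, hya, hda]
      nlinarith [hu.1]
    by_cases hyb : y = b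
    · rw [hMy, hyb, hdb]
      nlinarith [hu.1]
    have h1 : a < y := lt_of_le_of_ne hy.1 (Ne.symm hya)
    have h2 : y < b := lt_of_le_of_ne hy.2 hyb
    have hd1 : d (y+1) ≤ M := Finset.le_sup' d (Finset.mem_Icc.2 ⟨by omega, by omega⟩)
    have hd2 : d (y-1) ≤ M := Finset.le_sup' d (Finset.mem_Icc.2 ⟨by omega, by omega⟩)
    have hrec : F y - G y
        = u * (p * (F (y+1) - G (y+1)) + (1-p) * (F (y-1) - G (y-1))) := by
      rw [hF y h1 h2, hG y h1 h2]; ring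
    conv_lhs => rw [hMy]
    calc d y = |u * (p * (F (y+1) - G (y+1)) + (1-p) * (F (y-1) - G (y-1)))| := by
          rw [hd]; simp only []; rw [hrec]
      _ ≤ u * (p * d (y+1) + (1-p) * d (y-1)) := by
          rw [abs_mul, abs_of_pos hu.1]
          apply mul_le_mul_of_nonneg_left _ hu.1.le
          calc |p * (F (y+1) - G (y+1)) + (1-p) * (F (y-1) - G (y-1))|
              ≤ |p * (F (y+1) - G (y+1))| + |(1-p) * (F (y-1) - G (y-1))| := abs_add_le _ _
            _ = p * d (y+1) + (1-p) * d (y-1) := by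
                rw [abs_mul, abs_mul, abs_of_pos hp.1, abs_of_pos (by linarith [hp.2] : (0:ℝ) < 1-p)]
      _ ≤ u * (p * M + (1-p) * M) := by
          apply mul_le_mul_of_nonneg_left _ hu.1.le
          have h3 : (0:ℝ) < 1 - p := by linarith [hp.2]
          nlinarith [hp.1]
      _ = u * M := by ring
  have hMle : M ≤ 0 := by nlinarith [hu.2, hM0]
  intro y hy1 hy2
  have h := Finset.le_sup' d (Finset.mem_Icc.2 ⟨hy1, hy2⟩)
  have h2 : |F y - G y| ≤ 0 := le_trans h hMle
  have h3 := abs_nonneg (F y - G y)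
  have : |F y - G y| = 0 := le_antisymm h2 h3
  have := abs_eq_zero.1 this
  linarith [this]

lemma mainLemma (hp : p ∈ Set.Ioo (0:ℝ) 1) (hu : u ∈ Set.Ioo (0:ℝ) 1)
    (a b x t o : ℤ) (hax : a < x) (hxb : x < b)
    (hto : (t = a ∧ o = b) ∨ (t = b ∧ o = a)) :
    (∑' j : ℕ, hitP p a b t x j * u^j)
      = (Bplus p u ^ (x - o) - Bminus p u ^ (x - o)) /
          (Bplus p u ^ (t - o) - Bminus p u ^ (t - o)) := by
  have hab : a < b := hax.trans hxb
  have ht : t = a ∨ t = b := by rcases hto with ⟨h, -⟩ | ⟨h, -⟩ <;> [left; right] <;> exact h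
  have hBm := Bm_pos hp hu
  have hBlt := Bm_lt_Bp hp hu
  have hBmne : Bminus p u ≠ 0 := hBm.ne'
  have hBpne : Bplus p u ≠ 0 := (hBm.trans hBlt).ne'
  have htone : t - o ≠ 0 := by rcases hto with ⟨rfl, rfl⟩ | ⟨rfl, rfl⟩ <;> omega
  have hDne : Bplus p u ^ (t - o) - Bminus p u ^ (t - o) ≠ 0 :=
    sub_ne_zero.2 (zpow_neq hp hu htone)
  set G : ℤ → ℝ := fun y =>
    (Bplus p u ^ (y - o) - Bminus p u ^ (y - o)) /
      (Bplus p u ^ (t - o) - Bminus p u ^ (t - o)) with hG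
  have hGt : G t = 1 := div_self hDne
  have hGo : G o = 0 := by simp [hG]
  have hGrec : ∀ y : ℤ, G y = u * (p * G (y+1) + (1-p) * G (y-1)) := by
    intro y
    have e1 : y + 1 - o = (y - o) + 1 := by ring
    have e2 : y - 1 - o = (y - o) - 1 := by ring
    simp only [hG, e1, e2]
    rw [zrec hBpne (rootP hp hu) (y - o), zrec hBmne (rootM hp hu) (y - o)]
    ring
  set F : ℤ → ℝ := FF p u a b t with hF
  have hFa : F a = G a := by
    rcases hto with ⟨h1, h2⟩ | ⟨h1, h2⟩
    · rw [← h1, hGt]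
      show FF p u a b t t = 1
      rw [FF, if_pos (Or.inl h1), if_pos rfl]
    · rw [← h2, hGo]
      show FF p u a b t o = 0
      rw [FF, if_pos (Or.inl h2), if_neg (by omega : ¬ o = t)]
  have hFb : F b = G b := by
    rcases hto with ⟨h1, h2⟩ | ⟨h1, h2⟩
    · rw [← h2, hGo]
      show FF p u a b t o = 0
      rw [FF, if_pos (Or.inr h2), if_neg (by omega : ¬ o = t)]
    · rw [← h1, hGt]
      show FF p u a b t t = 1
      rw [FF, if_pos (Or.inr h1), if_pos rfl]
  have hFrec : ∀ y, a < y → y < b → F y = u * (p * F (y+1) + (1-p) * F (y-1)) := by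
    intro y h1 h2
    have hFy : F y = ∑' j : ℕ, hitP p a b t y j * u^j := by
      rw [hF]
      rw [FF, if_neg (by push_neg; omega)]
    rw [hFy, recurrence hp hu a b t y h1 h2 ht]
  have heq := unique_rec hp hu hab F G hFa hFb hFrec (fun y _ _ => hGrec y) x hax.le hxb.le
  have hFx : F x = ∑' j : ℕ, hitP p a b t x j * u^j := by
    rw [hF, FF, if_neg (by push_neg; omega)]
  rw [← hFx, heq]

end Main


/-- Two-sided exit generating functions: for `a < x < b` and `0 < u < 1`,
`E_x(u^{τ_a}; τ_a < τ_b)` and `E_x(u^{τ_b}; τ_b < τ_a)` are given by ratios of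
powers of `B⁺(u)` and `B⁻(u)`. -/
theorem stmt6 (p : ℝ) (hp : p ∈ Set.Ioo (0:ℝ) 1) (a b x : ℤ)
    (hax : a < x) (hxb : x < b) (u : ℝ) (hu : u ∈ Set.Ioo (0:ℝ) 1) :
    (∑' j : ℕ, walkProb p x j
        (fun S => 1 ≤ j ∧ S j = a ∧ ∀ i, 1 ≤ i → i < j → S i ≠ a ∧ S i ≠ b) * u^j) =
      (Bplus p u ^ (x - b) - Bminus p u ^ (x - b)) /
        (Bplus p u ^ (a - b) - Bminus p u ^ (a - b)) ∧
    (∑' j : ℕ, walkProb p x j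
        (fun S => 1 ≤ j ∧ S j = b ∧ ∀ i, 1 ≤ i → i < j → S i ≠ a ∧ S i ≠ b) * u^j) =
      (Bplus p u ^ (x - a) - Bminus p u ^ (x - a)) /
        (Bplus p u ^ (b - a) - Bminus p u ^ (b - a)) := by
  constructor
  · exact mainLemma hp hu a b x a b hax hxb (Or.inl ⟨rfl, rfl⟩)
  · exact mainLemma hp hu a b x b a hax hxb (Or.inr ⟨rfl, rfl⟩)
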